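/- arXiv:2602.01468 — 3 statements merged into one kernel-verified Lean document; each statement's English description precedes it below -/
import Mathlib

section
/- In one dimension: if a₁ ≠ a₂ are real numbers and the identity exp(m₁x)·a₁x/(exp(m₁x)+exp(m₂x)) + exp(m₂x)·a₂x/(exp(m₁x)+exp(m₂x)) = exp(m₁'x)·a₁'x/(exp(m₁'x)+exp(m₂'x)) + exp(m₂'x)·a₂'x/(exp(m₁'x)+exp(m₂'x)) holds for all x ∈ ℝ, with m₂ = m₂' = 0, m₁, m₁' > 0, and a₁' ≠ a₂', then m₁ = m₁', a₁ = a₁', and a₂ = a₂'. -/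
/-!
A two-expert softmax mixture of linear experts with gates `m₁ x` and `0` equals
`x (a₂ + (a₁ - a₂) σ(m₁ x))`, where `σ` is the logistic sigmoid. Off `x = 0` the two sides of the
identity therefore agree as functions `c + d σ(m x)` with `m > 0`; their limits at `-∞` and `+∞`
recover `c = a₂` and `c + d = a₁`, and injectivity of `σ` then recovers `m`.
-/

open Real Filter Topology

lemma softmax_two_mixture_eq_sigmoid (s t u v : ℝ) :
    exp s * u / (exp s + exp t) + exp t * v / (exp s + exp t)
      = v + (u - v) * sigmoid (s - t) := by
  have hsum : exp s + exp t ≠ 0 := by positivity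
  have hs : exp s ≠ 0 := (exp_pos s).ne'
  rw [sigmoid_def, neg_sub, exp_sub]
  field_simp
  ring

section SigmoidAffine

variable {c d m : ℝ}

lemma tendsto_add_mul_sigmoid_mul_atBot (hm : 0 < m) :
    Tendsto (fun x ↦ c + d * sigmoid (m * x)) atBot (𝓝 c) := by
  have hσ := tendsto_sigmoid_atBot.comp (tendsto_id.const_mul_atBot hm)
  simpa using (hσ.const_mul d).const_add c

lemma tendsto_add_mul_sigmoid_mul_atTop (hm : 0 < m) :
    Tendsto (fun x ↦ c + d * sigmoid (m * x)) atTop (𝓝 (c + d)) := by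
  have hσ := tendsto_sigmoid_atTop.comp (tendsto_id.const_mul_atTop hm)
  simpa using (hσ.const_mul d).const_add c

theorem eq_of_add_mul_sigmoid_mul_eq {c' d' m' : ℝ} (hm : 0 < m) (hm' : 0 < m') (hd : d ≠ 0)
    (h : ∀ x ≠ 0, c + d * sigmoid (m * x) = c' + d' * sigmoid (m' * x)) :
    c = c' ∧ d = d' ∧ m = m' := by
  have hBot : ∀ᶠ x in atBot, c + d * sigmoid (m * x) = c' + d' * sigmoid (m' * x) :=
    (eventually_lt_atBot 0).mono fun x hx ↦ h x hx.ne
  have hTop : ∀ᶠ x in atTop, c + d * sigmoid (m * x) = c' + d' * sigmoid (m' * x) :=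
    (eventually_gt_atTop 0).mono fun x hx ↦ h x hx.ne'
  have hc : c = c' := tendsto_nhds_unique
    ((tendsto_add_mul_sigmoid_mul_atBot hm).congr' hBot) (tendsto_add_mul_sigmoid_mul_atBot hm')
  have hd' : d = d' := by
    have := tendsto_nhds_unique
      ((tendsto_add_mul_sigmoid_mul_atTop hm).congr' hTop) (tendsto_add_mul_sigmoid_mul_atTop hm')
    linarith
  subst hc hd'
  have hσ : sigmoid (m * 1) = sigmoid (m' * 1) :=
    mul_left_cancel₀ hd (add_left_cancel (h 1 one_ne_zero))
  simpa using sigmoid_injective hσ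

end SigmoidAffine

theorem softmax_linear_mixture_identifiable_1d_general
    (m₁ m₂ m₁' m₂' a₁ a₂ a₁' a₂' : ℝ)
    (hm₂ : m₂ = 0) (hm₂' : m₂' = 0)
    (hm₁ : 0 < m₁) (hm₁' : 0 < m₁')
    (ha : a₁ ≠ a₂)
    (h : ∀ x : ℝ,
        Real.exp (m₁ * x) * (a₁ * x) / (Real.exp (m₁ * x) + Real.exp (m₂ * x))
          + Real.exp (m₂ * x) * (a₂ * x) / (Real.exp (m₁ * x) + Real.exp (m₂ * x))
        = Real.exp (m₁' * x) * (a₁' * x) / (Real.exp (m₁' * x) + Real.exp (m₂' * x))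
          + Real.exp (m₂' * x) * (a₂' * x) / (Real.exp (m₁' * x) + Real.exp (m₂' * x))) :
    m₁ = m₁' ∧ a₁ = a₁' ∧ a₂ = a₂' := by
  subst hm₂ hm₂'
  have hslope : ∀ x ≠ 0, a₂ + (a₁ - a₂) * sigmoid (m₁ * x)
      = a₂' + (a₁' - a₂') * sigmoid (m₁' * x) := by
    intro x hx
    have hx' := h x
    simp only [softmax_two_mixture_eq_sigmoid, zero_mul, sub_zero] at hx'
    exact mul_left_cancel₀ hx (by linear_combination hx')
  obtain ⟨ha₂, ha₁, hm⟩ := eq_of_add_mul_sigmoid_mul_eq hm₁ hm₁' (sub_ne_zero.mpr ha) hslope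
  exact ⟨hm, by linarith, ha₂⟩

/-- One-dimensional `N = 2` identifiability of softmax-gated mixtures of linear
experts, normalized so that the last gating parameter is `0`. -/
theorem softmax_linear_mixture_identifiable_1d
    (m₁ m₂ m₁' m₂' a₁ a₂ a₁' a₂' : ℝ)
    (hm₂ : m₂ = 0) (hm₂' : m₂' = 0)
    (hm₁ : 0 < m₁) (hm₁' : 0 < m₁')
    (ha : a₁ ≠ a₂) (ha' : a₁' ≠ a₂')
    (h : ∀ x : ℝ,
        Real.exp (m₁ * x) * (a₁ * x) / (Real.exp (m₁ * x) + Real.exp (m₂ * x))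
          + Real.exp (m₂ * x) * (a₂ * x) / (Real.exp (m₁ * x) + Real.exp (m₂ * x))
        = Real.exp (m₁' * x) * (a₁' * x) / (Real.exp (m₁' * x) + Real.exp (m₂' * x))
          + Real.exp (m₂' * x) * (a₂' * x) / (Real.exp (m₁' * x) + Real.exp (m₂' * x))) :
    m₁ = m₁' ∧ a₁ = a₁' ∧ a₂ = a₂' :=
  softmax_linear_mixture_identifiable_1d_general m₁ m₂ m₁' m₂' a₁ a₂ a₁' a₂' hm₂ hm₂' hm₁ hm₁' ha h
end

section
/- Define the sequence of mixing-measure perturbations with weight perturbation w_n = w* + 1/n^{r+1} and parameter perturbation of magnitude 1/n in the expert vectors. Then the Voronoi loss L_{1,r}(G_n, G*) defined as the weight discrepancy plus the weighted r-th powers of parameter discrepancies satisfies L_{1,r}(G_n, G*) = O(n^{−r}), while the pointwise function discrepancy |f_{G_n}(x) − f_{G*}(x)| = O(n^{−(r+1)}); hence the ratio tends to 0 as n → ∞. -/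
open Real Matrix Filter

/-- Softmax gating weight built from quadratic-form logits. -/
noncomputable def smW {N d : ℕ} (M : Fin N → Matrix (Fin d) (Fin d) ℝ)
    (x : Fin d → ℝ) (i : Fin N) : ℝ :=
  Real.exp (x ⬝ᵥ (M i).mulVec x) / ∑ j : Fin N, Real.exp (x ⬝ᵥ (M j).mulVec x)

/-- True softmax-gated mixture of linear experts (one head, one channel). -/
noncomputable def fTrue {N d : ℕ} (ω : ℝ) (M : Fin N → Matrix (Fin d) (Fin d) ℝ)
    (a : Fin N → (Fin d → ℝ)) (x : Fin d → ℝ) : ℝ :=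
  ω * ∑ i : Fin N, smW M x i * (a i ⬝ᵥ x)

/-- Perturbed mixing measure: the atom is split into two atoms at `a ± (1/n)e₁`, each
carrying weight `(ω* + 1/n^{r+1})/2`. -/
noncomputable def fPert {N d : ℕ} [NeZero d] (ω : ℝ) (r : ℝ)
    (M : Fin N → Matrix (Fin d) (Fin d) ℝ) (a : Fin N → (Fin d → ℝ))
    (n : ℕ) (x : Fin d → ℝ) : ℝ :=
  ((ω + (n : ℝ) ^ (-(r + 1))) / 2) *
    ((∑ i : Fin N, smW M x i *
        ((a i + (1 / (n : ℝ)) • (Pi.single (0 : Fin d) 1 : Fin d → ℝ)) ⬝ᵥ x))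
     + (∑ i : Fin N, smW M x i *
        ((a i - (1 / (n : ℝ)) • (Pi.single (0 : Fin d) 1 : Fin d → ℝ)) ⬝ᵥ x)))

/-- The Voronoi loss `L_{1,r}(G_n, G*)` of the explicit perturbed sequence: weight
discrepancy `1/n^{r+1}` plus total weight `(ω* + 1/n^{r+1})` times `N` parameter
discrepancies, each `‖(1/n)e₁‖^r = n^{-r}`. -/
noncomputable def voronoiLossSeq (N : ℕ) (ω : ℝ) (r : ℝ) (n : ℕ) : ℝ :=
  (n : ℝ) ^ (-(r + 1)) + (ω + (n : ℝ) ^ (-(r + 1))) * N * (n : ℝ) ^ (-r)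

lemma key_diff {N d : ℕ} [NeZero d] (ω : ℝ) (r : ℝ)
    (M : Fin N → Matrix (Fin d) (Fin d) ℝ) (a : Fin N → (Fin d → ℝ))
    (n : ℕ) (x : Fin d → ℝ) :
    fPert ω r M a n x - fTrue ω M a x
      = (n : ℝ) ^ (-(r + 1)) * ∑ i : Fin N, smW M x i * (a i ⬝ᵥ x) := by
  unfold fPert fTrue
  simp only [add_dotProduct, sub_dotProduct, mul_add, mul_sub,
    Finset.sum_add_distrib, Finset.sum_sub_distrib]
  ring

/-- For the explicit symmetric-splitting perturbation sequence, the Voronoi loss is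
`O(n^{−r})`, the pointwise function discrepancy is `O(n^{−(r+1)})`, and hence their
ratio tends to `0`. -/
theorem voronoi_loss_vs_function_discrepancy
    (N d : ℕ) [NeZero d] (hN : 0 < N)
    (M : Fin N → Matrix (Fin d) (Fin d) ℝ) (a : Fin N → (Fin d → ℝ))
    (ω : ℝ) (hω : 0 < ω) (r : ℝ) (hr : 1 ≤ r) :
    (∃ C > 0, ∀ n : ℕ, 1 ≤ n →
        voronoiLossSeq N ω r n ≤ C * (n : ℝ) ^ (-r))
    ∧ (∀ x : Fin d → ℝ, ∃ C > 0, ∀ n : ℕ, 1 ≤ n →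
        |fPert ω r M a n x - fTrue ω M a x| ≤ C * (n : ℝ) ^ (-(r + 1)))
    ∧ (∀ x : Fin d → ℝ,
        Tendsto (fun n : ℕ => (fPert ω r M a n x - fTrue ω M a x)
          / voronoiLossSeq N ω r n) atTop (nhds 0)) := by
  refine ⟨⟨1 + (ω + 1) * N, by positivity, fun n hn => ?_⟩, fun x => ?_, fun x => ?_⟩
  · have hn1 : (1:ℝ) ≤ (n:ℝ) := by exact_mod_cast hn
    have h1 : (n:ℝ) ^ (-(r+1)) ≤ (n:ℝ) ^ (-r) :=
      Real.rpow_le_rpow_of_exponent_le hn1 (by linarith)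
    have h2 : (n:ℝ) ^ (-(r+1)) ≤ 1 :=
      Real.rpow_le_one_of_one_le_of_nonpos hn1 (by linarith)
    have h3 : (0:ℝ) ≤ (n:ℝ) ^ (-r) := Real.rpow_nonneg (by linarith) _
    unfold voronoiLossSeq
    nlinarith [Nat.cast_nonneg (α := ℝ) N, mul_le_mul_of_nonneg_right
      (mul_le_mul_of_nonneg_right (by linarith : ω + (n:ℝ)^(-(r+1)) ≤ ω + 1)
        (Nat.cast_nonneg (α := ℝ) N)) h3]
  · refine ⟨|∑ i : Fin N, smW M x i * (a i ⬝ᵥ x)| + 1, by positivity, fun n hn => ?_⟩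
    rw [key_diff, abs_mul, abs_of_nonneg (Real.rpow_nonneg (Nat.cast_nonneg n) _)]
    have h3 : (0:ℝ) ≤ (n:ℝ) ^ (-(r+1)) := Real.rpow_nonneg (Nat.cast_nonneg n) _
    nlinarith [abs_nonneg (∑ i : Fin N, smW M x i * (a i ⬝ᵥ x))]
  · set S := ∑ i : Fin N, smW M x i * (a i ⬝ᵥ x) with hSdef
    have hbound : ∀ n : ℕ, 1 ≤ n →
        |(fPert ω r M a n x - fTrue ω M a x) / voronoiLossSeq N ω r n|
          ≤ (|S| / (ω * N)) * ((n:ℝ))⁻¹ := by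
      intro n hn
      have hn1 : (1:ℝ) ≤ (n:ℝ) := by exact_mod_cast hn
      have hn0 : (0:ℝ) < (n:ℝ) := by linarith
      have hrp : (0:ℝ) < (n:ℝ) ^ (-r) := Real.rpow_pos_of_pos hn0 _
      have hrp1 : (0:ℝ) < (n:ℝ) ^ (-(r+1)) := Real.rpow_pos_of_pos hn0 _
      have hL : ω * N * (n:ℝ) ^ (-r) ≤ voronoiLossSeq N ω r n := by
        unfold voronoiLossSeq
        have hNpos : (0:ℝ) < N := by exact_mod_cast hN
        nlinarith [mul_pos (mul_pos hrp1 hNpos) hrp]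
      have hLpos : 0 < voronoiLossSeq N ω r n := by
        have hNpos : (0:ℝ) < N := by exact_mod_cast hN
        calc (0:ℝ) < ω * N * (n:ℝ) ^ (-r) := by positivity
          _ ≤ _ := hL
      rw [key_diff, abs_div, abs_of_pos hLpos, abs_mul,
        abs_of_nonneg (le_of_lt hrp1)]
      have hsplit : (n:ℝ) ^ (-(r+1)) = (n:ℝ) ^ (-r) * ((n:ℝ))⁻¹ := by
        rw [← Real.rpow_neg_one (n:ℝ), ← Real.rpow_add hn0]
        ring_nf
      have hNpos : (0:ℝ) < N := by exact_mod_cast hN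
      calc (n:ℝ) ^ (-(r+1)) * |S| / voronoiLossSeq N ω r n
          ≤ (n:ℝ) ^ (-(r+1)) * |S| / (ω * N * (n:ℝ) ^ (-r)) := by
            apply div_le_div_of_nonneg_left (by positivity) (by positivity) hL
        _ = (|S| / (ω * N)) * ((n:ℝ))⁻¹ := by
            rw [hsplit]; field_simp
    have hlim : Tendsto (fun n : ℕ => (|S| / (ω * N)) * ((n:ℝ))⁻¹) atTop (nhds 0) := by
      have := tendsto_natCast_atTop_atTop (R := ℝ) |>.inv_tendsto_atTop
      simpa using tendsto_const_nhds.mul this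
    refine squeeze_zero_norm' ?_ hlim
    filter_upwards [eventually_ge_atTop 1] with n hn
    exact_mod_cast (Real.norm_eq_abs _ ▸ hbound n hn)
end

section
/- For the function ū(x; M, a) = exp(xᵀMx)·φ(aᵀx) where φ = sigmoid and d = 1: the functions x ↦ ū(x; M, a), x ↦ ∂ū/∂a(x; M, a), and x ↦ ∂ū/∂M(x; M, a) are linearly independent as functions of x ∈ ℝ, for any fixed M ∈ ℝ and a ≠ 0. -/
/-!
Dividing a vanishing combination by `e^{Mx²}` leaves
`(c₁ + c₃x²)·σ(ax) + c₂·x·σ'(ax) = 0`. At `x = 0` this gives `c₁ = 0`. Adding the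
instances at `x = 1` and `x = -1`, the `σ'` terms cancel because `σ'` is even, and
`σ(a) + σ(-a) = 1` leaves `c₁ + c₃ = 0`. Finally `σ'(a) > 0` forces `c₂ = 0`.
-/

open Real

/-- The standard sigmoid `t ↦ 1/(1+e^{−t})`. -/
noncomputable def sigmoid (t : ℝ) : ℝ := 1 / (1 + Real.exp (-t))

/-- Derivative of the sigmoid, `sigmoid'(t) = e^{−t}/(1+e^{−t})²`. -/
noncomputable def sigmoid' (t : ℝ) : ℝ := Real.exp (-t) / (1 + Real.exp (-t)) ^ 2

theorem sigmoid_eq_real_sigmoid (t : ℝ) : _root_.sigmoid t = Real.sigmoid t :=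
  one_div _

theorem sigmoid'_eq_mul_sigmoid_neg (t : ℝ) :
    sigmoid' t = Real.sigmoid t * Real.sigmoid (-t) := by
  rw [← Real.sigmoid_mul_rexp_neg, sigmoid', Real.sigmoid_def]
  field_simp

theorem sigmoid'_neg (t : ℝ) : sigmoid' (-t) = sigmoid' t := by
  rw [sigmoid'_eq_mul_sigmoid_neg, sigmoid'_eq_mul_sigmoid_neg, neg_neg, mul_comm]

theorem sigmoid'_pos (t : ℝ) : 0 < sigmoid' t := by
  rw [sigmoid'_eq_mul_sigmoid_neg]
  exact mul_pos (Real.sigmoid_pos t) (Real.sigmoid_pos (-t))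

theorem sigmoid_expert_derivatives_linearIndependent_general
    (M a : ℝ) (c₁ c₂ c₃ : ℝ)
    (h : ∀ x : ℝ,
        c₁ * (Real.exp (M * x ^ 2) * _root_.sigmoid (a * x))
          + c₂ * (Real.exp (M * x ^ 2) * x * sigmoid' (a * x))
          + c₃ * (x ^ 2 * Real.exp (M * x ^ 2) * _root_.sigmoid (a * x)) = 0) :
    c₁ = 0 ∧ c₂ = 0 ∧ c₃ = 0 := by
  have reduced : ∀ x : ℝ,
      (c₁ + c₃ * x ^ 2) * Real.sigmoid (a * x) + c₂ * x * sigmoid' (a * x) = 0 := by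
    intro x
    have hx := h x
    simp only [sigmoid_eq_real_sigmoid] at hx
    have factored : Real.exp (M * x ^ 2) *
        ((c₁ + c₃ * x ^ 2) * Real.sigmoid (a * x) + c₂ * x * sigmoid' (a * x)) = 0 := by
      linear_combination hx
    exact (mul_eq_zero.mp factored).resolve_left (Real.exp_ne_zero _)
  have hc₁ : c₁ = 0 := by simpa [Real.sigmoid_zero] using reduced 0
  have hc₃ : c₃ = 0 := by
    have at_one := reduced 1
    rw [mul_one] at at_one
    have at_neg_one := reduced (-1)
    rw [mul_neg_one, Real.sigmoid_neg, sigmoid'_neg] at at_neg_one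
    linear_combination at_one + at_neg_one - hc₁
  have hc₂ : c₂ = 0 := by
    have at_one := reduced 1
    rw [hc₁, hc₃, mul_one] at at_one
    simpa [(sigmoid'_pos a).ne'] using at_one
  exact ⟨hc₁, hc₂, hc₃⟩

/-- In dimension one with sigmoid activation, the expert function
`ū(x; M, a) = e^{Mx²}·sigmoid(ax)` and its partial derivatives in `a` and `M`,
namely `x·e^{Mx²}·sigmoid'(ax)` and `x²·e^{Mx²}·sigmoid(ax)`, are linearly
independent functions of `x` whenever `a ≠ 0`. -/
theorem sigmoid_expert_derivatives_linearIndependent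
    (M a : ℝ) (ha : a ≠ 0) (c₁ c₂ c₃ : ℝ)
    (h : ∀ x : ℝ,
        c₁ * (Real.exp (M * x ^ 2) * _root_.sigmoid (a * x))
          + c₂ * (Real.exp (M * x ^ 2) * x * sigmoid' (a * x))
          + c₃ * (x ^ 2 * Real.exp (M * x ^ 2) * _root_.sigmoid (a * x)) = 0) :
    c₁ = 0 ∧ c₂ = 0 ∧ c₃ = 0 :=
  sigmoid_expert_derivatives_linearIndependent_general M a c₁ c₂ c₃ h
end
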